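/- Let f: S → ℝ be layer-wise (L⁰, L¹)-smooth. Let X = [X_1,…,X_p] ∈ S and suppose X⁺ = [X⁺_1,…,X⁺_p] is such that, for each i, X⁺_i minimizes the linear functional X_i ↦ ⟨∇_i f(X), X_i⟩_{(i)} over the ball {X_i ∈ S_i : ‖X_i − X_i‖_{(i)} ≤ t_i} of radius t_i = ‖∇_i f(X)‖_{(i)⋆} / (L⁰_i + L¹_i ‖∇_i f(X)‖_{(i)⋆}) centered at X_i. Then f(X⁺) ≤ f(X) − Σ_{i=1}^p ‖∇_i f(X)‖_{(i)⋆}² / (2 (L⁰_i + L¹_i ‖∇_i f(X)‖_{(i)⋆})). -/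

import Mathlib

/-!
Along the segment `X + s • (X⁺ - X)`, `s ∈ [0, 1]`, layer-wise smoothness at the base point `X`
and the duality bound `⟨A, Z⟩ ≤ ‖A‖⋆ ‖Z‖` make the directional derivative grow at most like
`s · Σᵢ Lᵢ ‖X⁺ᵢ - Xᵢ‖²`, where `Lᵢ = L⁰ᵢ + L¹ᵢ ‖∇ᵢ f(X)‖⋆`. Hence
`f(X⁺) ≤ f(X) + Σᵢ (⟨∇ᵢ f(X), X⁺ᵢ - Xᵢ⟩ + Lᵢ ‖X⁺ᵢ - Xᵢ‖² / 2)`. The oracle step turns the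
linear term into `-tᵢ ‖∇ᵢ f(X)‖⋆` with `‖X⁺ᵢ - Xᵢ‖ ≤ tᵢ`, and the radius `tᵢ = ‖∇ᵢ f(X)‖⋆ / Lᵢ`
minimizes `-t ‖∇ᵢ f(X)‖⋆ + Lᵢ t² / 2`, with minimum `-‖∇ᵢ f(X)‖⋆² / (2 Lᵢ)`.
-/

noncomputable section
open Finset

/-- Trace inner product `⟨A,B⟩ = tr(AᵀB)` on `m×n` real matrices (viewed as functions). -/
def tip {m n : ℕ} (A B : Fin m → Fin n → ℝ) : ℝ := ∑ a, ∑ b, A a b * B a b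

/-- An arbitrary norm on the space of `m×n` real matrices. -/
structure MatNorm (m n : ℕ) where
  N : (Fin m → Fin n → ℝ) → ℝ
  pos : ∀ A, A ≠ 0 → 0 < N A
  zero : N 0 = 0
  smul : ∀ (c : ℝ) (A : Fin m → Fin n → ℝ), N (c • A) = |c| * N A
  triangle : ∀ A B, N (A + B) ≤ N A + N B

/-- The dual norm `‖A‖⋆ = sup_{‖Z‖ ≤ 1} ⟨A, Z⟩`. -/
def MatNorm.dual {m n : ℕ} (nn : MatNorm m n) (A : Fin m → Fin n → ℝ) : ℝ :=
  sSup {r : ℝ | ∃ Z, nn.N Z ≤ 1 ∧ r = tip A Z}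

/-- `Y` minimizes the linear functional `Z ↦ ⟨G, Z⟩` over the ball of radius `t`
centered at `C` (the linear minimization oracle). -/
def IsLMOMin {m n : ℕ} (nn : MatNorm m n) (G C : Fin m → Fin n → ℝ) (t : ℝ)
    (Y : Fin m → Fin n → ℝ) : Prop :=
  nn.N (Y - C) ≤ t ∧ ∀ Z, nn.N (Z - C) ≤ t → tip G Y ≤ tip G Z

section tip

variable {m n : ℕ} (A B Z W : Fin m → Fin n → ℝ)

@[simp] lemma tip_zero_right : tip A 0 = 0 := by simp [tip]

@[simp] lemma tip_smul_right (c : ℝ) : tip A (c • Z) = c * tip A Z := by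
  simp [tip, Finset.mul_sum, mul_left_comm]

@[simp] lemma tip_neg_right : tip A (-Z) = -tip A Z := by simp [tip]

lemma tip_sub_left : tip (A - B) Z = tip A Z - tip B Z := by
  simp [tip, sub_mul]

lemma tip_sub_right : tip A (Z - W) = tip A Z - tip A W := by
  simp [tip, mul_sub]

end tip

namespace MatNorm

variable {m n : ℕ} (nn : MatNorm m n)

lemma nonneg (A : Fin m → Fin n → ℝ) : 0 ≤ nn.N A := by
  rcases eq_or_ne A 0 with rfl | hA
  · exact nn.zero.ge
  · exact (nn.pos A hA).le

lemma neg (A : Fin m → Fin n → ℝ) : nn.N (-A) = nn.N A := by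
  simpa using nn.smul (-1) A

lemma convexOn : ConvexOn ℝ Set.univ nn.N := by
  refine ⟨convex_univ, fun A _ B _ a b ha hb _ => ?_⟩
  calc nn.N (a • A + b • B) ≤ nn.N (a • A) + nn.N (b • B) := nn.triangle _ _
    _ = a • nn.N A + b • nn.N B := by
      rw [nn.smul, nn.smul, abs_of_nonneg ha, abs_of_nonneg hb, smul_eq_mul, smul_eq_mul]

lemma continuous : Continuous nn.N :=
  continuousOn_univ.mp (nn.convexOn.continuousOn isOpen_univ)

/-- `nn` has a positive minimum `μ` on the unit sphere of the sup norm, so `‖Z‖ ≤ nn.N Z / μ`. -/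
lemma isBounded_setOf_le_one : Bornology.IsBounded {Z | nn.N Z ≤ 1} := by
  rcases subsingleton_or_nontrivial (Fin m → Fin n → ℝ) with hE | hE
  · exact Bornology.IsBounded.all _
  obtain ⟨Z₀, hZ₀, hmin⟩ := (isCompact_sphere (0 : Fin m → Fin n → ℝ) 1).exists_isMinOn
    (NormedSpace.sphere_nonempty.mpr zero_le_one) nn.continuous.continuousOn
  have hμ : 0 < nn.N Z₀ := nn.pos Z₀ (ne_zero_of_mem_unit_sphere ⟨Z₀, hZ₀⟩)
  refine (Metric.isBounded_closedBall (x := 0) (r := (nn.N Z₀)⁻¹)).subset fun Z hZ => ?_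
  rw [mem_closedBall_zero_iff]
  rcases eq_or_ne Z 0 with rfl | hZ0
  · simpa using hμ.le
  have hnZ : 0 < ‖Z‖ := norm_pos_iff.mpr hZ0
  have hunit : ‖Z‖⁻¹ • Z ∈ Metric.sphere (0 : Fin m → Fin n → ℝ) 1 := by
    simp [norm_smul, hnZ.ne']
  rw [le_inv_comm₀ hnZ hμ]
  calc nn.N Z₀ ≤ nn.N (‖Z‖⁻¹ • Z) := hmin hunit
    _ = ‖Z‖⁻¹ * nn.N Z := by rw [nn.smul, abs_of_pos (inv_pos.mpr hnZ)]
    _ ≤ ‖Z‖⁻¹ := mul_le_of_le_one_right (inv_nonneg.mpr hnZ.le) hZ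

lemma bddAbove_tip (A : Fin m → Fin n → ℝ) :
    BddAbove {r : ℝ | ∃ Z, nn.N Z ≤ 1 ∧ r = tip A Z} := by
  have hK : IsCompact (closure {Z | nn.N Z ≤ 1}) := nn.isBounded_setOf_le_one.isCompact_closure
  refine (hK.bddAbove_image (f := tip A) (by unfold tip; fun_prop)).mono ?_
  rintro _ ⟨Z, hZ, rfl⟩
  exact ⟨Z, subset_closure hZ, rfl⟩

lemma dual_nonneg (A : Fin m → Fin n → ℝ) : 0 ≤ nn.dual A :=
  le_csSup (nn.bddAbove_tip A) ⟨0, nn.zero.trans_le zero_le_one, (tip_zero_right A).symm⟩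

lemma tip_le_dual_mul (A Z : Fin m → Fin n → ℝ) : tip A Z ≤ nn.dual A * nn.N Z := by
  rcases eq_or_ne Z 0 with rfl | hZ
  · rw [tip_zero_right, nn.zero, mul_zero]
  have hNZ : 0 < nn.N Z := nn.pos Z hZ
  have hunit : (nn.N Z)⁻¹ * tip A Z ≤ nn.dual A := by
    refine le_csSup (nn.bddAbove_tip A) ⟨(nn.N Z)⁻¹ • Z, ?_, ?_⟩
    · rw [nn.smul, abs_of_pos (inv_pos.mpr hNZ), inv_mul_cancel₀ hNZ.ne']
    · rw [tip_smul_right]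
  rwa [inv_mul_le_iff₀ hNZ, mul_comm] at hunit

lemma tip_sub_le_of_dual_sub_le {A B H : Fin m → Fin n → ℝ} {L s : ℝ} (hs : 0 ≤ s)
    (h : nn.dual (A - B) ≤ L * nn.N (s • H)) : tip (B - A) H ≤ L * nn.N H ^ 2 * s := by
  calc tip (B - A) H = tip (A - B) (-H) := by
        rw [tip_neg_right, tip_sub_left, tip_sub_left, neg_sub]
    _ ≤ nn.dual (A - B) * nn.N H := by simpa only [nn.neg] using nn.tip_le_dual_mul (A - B) (-H)
    _ ≤ L * nn.N (s • H) * nn.N H := mul_le_mul_of_nonneg_right h (nn.nonneg H)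
    _ = L * nn.N H ^ 2 * s := by rw [nn.smul, abs_of_nonneg hs]; ring

end MatNorm

namespace IsLMOMin

variable {m n : ℕ} {nn : MatNorm m n} {G C Y : Fin m → Fin n → ℝ} {t : ℝ}

/-- Comparing `Y` with the competitors `C - t • Z`, `‖Z‖ ≤ 1`, shows that the oracle step
attains the value `-t ‖G‖⋆` of the linear model. -/
lemma mul_dual_le (h : IsLMOMin nn G C t Y) (ht : 0 ≤ t) :
    t * nn.dual G ≤ tip G C - tip G Y := by
  rcases ht.eq_or_lt with rfl | ht
  · have hY : Y = C := sub_eq_zero.mp <| by_contra fun hne => (nn.pos _ hne).not_ge h.1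
    simp [hY]
  rw [← le_div_iff₀' ht]
  refine csSup_le ⟨0, 0, nn.zero.trans_le zero_le_one, (tip_zero_right G).symm⟩ ?_
  rintro _ ⟨Z, hZ, rfl⟩
  have hball : nn.N ((C - t • Z) - C) ≤ t := by
    rw [sub_sub_cancel_left, nn.neg, nn.smul, abs_of_pos ht]
    exact mul_le_of_le_one_right ht.le hZ
  have hcomp := h.2 _ hball
  rw [tip_sub_right, tip_smul_right] at hcomp
  rw [le_div_iff₀' ht]
  linarith

lemma tip_sub_add_sq_le {L : ℝ} (h : IsLMOMin nn G C (nn.dual G / L) Y) (hL : 0 ≤ L) :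
    tip G (Y - C) + L * nn.N (Y - C) ^ 2 / 2 ≤ -(nn.dual G ^ 2 / (2 * L)) := by
  set d := nn.dual G
  have ht : 0 ≤ d / L := div_nonneg (nn.dual_nonneg G) hL
  have hlin := h.mul_dual_le ht
  have hquad : nn.N (Y - C) ^ 2 ≤ (d / L) ^ 2 := by gcongr; exacts [nn.nonneg _, h.1]
  calc tip G (Y - C) + L * nn.N (Y - C) ^ 2 / 2 ≤ -(d / L * d) + L * (d / L) ^ 2 / 2 := by
        rw [tip_sub_right]; gcongr; linarith
    _ = -(d ^ 2 / (2 * L)) := by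
        rcases hL.eq_or_lt with rfl | hL
        · simp
        · field_simp; ring

end IsLMOMin

lemma le_add_deriv_add_half_of_deriv_le {φ φ' : ℝ → ℝ} {c : ℝ}
    (hφ : ∀ s, HasDerivAt φ (φ' s) s) (hle : ∀ s ∈ Set.Icc (0 : ℝ) 1, φ' s ≤ φ' 0 + c * s) :
    φ 1 ≤ φ 0 + φ' 0 + c / 2 := by
  have hψ : ∀ s, HasDerivAt (fun s => φ s - φ' 0 * s - c / 2 * s ^ 2)
      (φ' s - φ' 0 - c * s) s := fun s => by
    refine (((hφ s).sub ((hasDerivAt_id' s).const_mul (φ' 0))).sub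
      ((hasDerivAt_pow 2 s).const_mul (c / 2))).congr_deriv ?_
    norm_num; ring
  have hanti : AntitoneOn (fun s => φ s - φ' 0 * s - c / 2 * s ^ 2) (Set.Icc 0 1) :=
    antitoneOn_of_hasDerivWithinAt_nonpos (convex_Icc 0 1)
      (HasDerivAt.continuousOn fun s _ => hψ s) (fun s _ => (hψ s).hasDerivWithinAt)
      fun s hs => by linarith [hle s (interior_subset hs)]
  have := hanti (Set.left_mem_Icc.2 zero_le_one) (Set.right_mem_Icc.2 zero_le_one) zero_le_one
  norm_num at this
  linarith

lemma le_add_fderiv_add_half_of_fderiv_le {E : Type*} [NormedAddCommGroup E] [NormedSpace ℝ E]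
    {f : E → ℝ} (hf : Differentiable ℝ f) {X H : E} {c : ℝ}
    (hle : ∀ s ∈ Set.Icc (0 : ℝ) 1, fderiv ℝ f (X + s • H) H ≤ fderiv ℝ f X H + c * s) :
    f (X + H) ≤ f X + fderiv ℝ f X H + c / 2 := by
  have hφ : ∀ s : ℝ, HasDerivAt (fun s => f (X + s • H)) (fderiv ℝ f (X + s • H) H) s :=
    fun s => by
      have := ((hasDerivAt_id' s).smul_const H).const_add X
      rw [one_smul] at this
      exact (hf _).hasFDerivAt.comp_hasDerivAt s this
  simpa using le_add_deriv_add_half_of_deriv_le hφ (by simpa using hle)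

/-- One-step descent of deterministic Gluon: if each `X⁺ᵢ` minimizes `⟨∇ᵢf(X), ·⟩` over the
ball of radius `tᵢ = ‖∇ᵢf(X)‖⋆/(L⁰ᵢ + L¹ᵢ‖∇ᵢf(X)‖⋆)` centered at `Xᵢ`, then
`f(X⁺) ≤ f(X) − Σᵢ ‖∇ᵢf(X)‖⋆²/(2(L⁰ᵢ + L¹ᵢ‖∇ᵢf(X)‖⋆))`. -/
theorem stmt_10 {p : ℕ} {m n : Fin p → ℕ}
    (nn : ∀ i, MatNorm (m i) (n i))
    (f : (∀ i, Fin (m i) → Fin (n i) → ℝ) → ℝ)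
    (g : (∀ i, Fin (m i) → Fin (n i) → ℝ) → ∀ i, Fin (m i) → Fin (n i) → ℝ)
    (hdiff : ContDiff ℝ 1 f)
    (hgrad : ∀ X H, fderiv ℝ f X H = ∑ i, tip (g X i) (H i))
    (L0 L1 : Fin p → ℝ) (hL0 : ∀ i, 0 ≤ L0 i) (hL1 : ∀ i, 0 ≤ L1 i)
    (hsmooth : ∀ i X Y, (nn i).dual (g X i - g Y i)
      ≤ (L0 i + L1 i * (nn i).dual (g X i)) * (nn i).N (X i - Y i))
    (X Xp : ∀ i, Fin (m i) → Fin (n i) → ℝ)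
    (hupd : ∀ i, IsLMOMin (nn i) (g X i) (X i)
      ((nn i).dual (g X i) / (L0 i + L1 i * (nn i).dual (g X i))) (Xp i)) :
    f Xp ≤ f X - ∑ i, ((nn i).dual (g X i)) ^ 2
      / (2 * (L0 i + L1 i * (nn i).dual (g X i))) := by
  set H := Xp - X
  set L : Fin p → ℝ := fun i => L0 i + L1 i * (nn i).dual (g X i)
  have hL : ∀ i, 0 ≤ L i := fun i => add_nonneg (hL0 i) (mul_nonneg (hL1 i) ((nn i).dual_nonneg _))
  have hgrad_le : ∀ s ∈ Set.Icc (0 : ℝ) 1, fderiv ℝ f (X + s • H) H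
      ≤ fderiv ℝ f X H + (∑ i, L i * (nn i).N (H i) ^ 2) * s := by
    intro s hs
    rw [hgrad, hgrad, ← sub_le_iff_le_add', ← Finset.sum_sub_distrib, Finset.sum_mul]
    refine Finset.sum_le_sum fun i _ => ?_
    rw [← tip_sub_left]
    refine (nn i).tip_sub_le_of_dual_sub_le hs.1 ?_
    have hsub : X i - (X + s • H) i = -(s • H i) := by simp
    simpa only [hsub, (nn i).neg] using hsmooth i X (X + s • H)
  have hdescent := le_add_fderiv_add_half_of_fderiv_le (hdiff.differentiable one_ne_zero) hgrad_le
  rw [add_sub_cancel, hgrad] at hdescent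
  calc f Xp ≤ f X + ∑ i, (tip (g X i) (H i) + L i * (nn i).N (H i) ^ 2 / 2) := by
        rw [Finset.sum_add_distrib, ← Finset.sum_div]; linarith
    _ ≤ f X + ∑ i, -((nn i).dual (g X i) ^ 2 / (2 * L i)) := by
        gcongr with i
        exact (hupd i).tip_sub_add_sq_le (hL i)
    _ = _ := by rw [Finset.sum_neg_distrib]; ring
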